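/- Let Ψ : ℤ^d → ℤ^t be a linear map of finite Green-Tao complexity at most s, and let L be a finite-index subgroup of Ψ(ℤ^d). Then L = (Ψ∘T)(ℤ^d) for some linear map Ψ∘T : ℤ^d → ℤ^t of Green-Tao complexity at most s, where T : ℤ^d → ℤ^d is injective with T(ℤ^d) = Ψ^{-1}(L). -/

import Mathlib

/-- The coefficient vector in `ℚ^d` of a linear form `ψ : ℤ^d → ℤ`. -/
noncomputable def coeffVec {d : ℕ} (ψ : (Fin d → ℤ) →+ ℤ) : Fin d → ℚ :=
  fun k => (ψ (Pi.single k 1) : ℚ)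

/-- `P` is a Green-Tao partition of size `s` of the system `ψ` at `i`:
the forms `ψ j`, `j ≠ i`, are partitioned into `s+1` classes (the fibers of `P`),
and `ψ i` does not lie in the `ℚ`-linear span of any class. -/
def IsGTPartition {d t : ℕ} (ψ : Fin t → ((Fin d → ℤ) →+ ℤ)) (i : Fin t) (s : ℕ)
    (P : {j : Fin t // j ≠ i} → Fin (s + 1)) : Prop :=
  ∀ k : Fin (s + 1),
    coeffVec (ψ i) ∉
      Submodule.span ℚ {v : Fin d → ℚ | ∃ j : {j : Fin t // j ≠ i}, P j = k ∧ v = coeffVec (ψ j.1)}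

/-- The `i`-complexity of a system of linear forms: the least size of a Green-Tao
partition at `i`, or `∞` if there is none. -/
noncomputable def iComplexity {d t : ℕ} (ψ : Fin t → ((Fin d → ℤ) →+ ℤ)) (i : Fin t) : ℕ∞ :=
  sInf {n : ℕ∞ | ∃ s : ℕ, (s : ℕ∞) = n ∧ ∃ P, IsGTPartition ψ i s P}

/-- The Green-Tao complexity of a system of linear forms. -/
noncomputable def GTComplexity {d t : ℕ} (ψ : Fin t → ((Fin d → ℤ) →+ ℤ)) : ℕ∞ :=
  ⨆ i : Fin t, iComplexity ψ i

/-- The linear map `ℤ^d → ℤ^t` determined by a system of linear forms. -/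
def systemMap {d t : ℕ} (ψ : Fin t → ((Fin d → ℤ) →+ ℤ)) :
    (Fin d → ℤ) →+ (Fin t → ℤ) :=
  AddMonoidHom.mk' (fun n k => ψ k n) (by intro a b; funext k; simp)

/-!
The preimage `Ψ⁻¹(L)` has finite index in `ℤ^d`, so it is free of rank `d` and is the image of
an injective `T : ℤ^d → ℤ^d`; its image under `Ψ` is `L ∩ Ψ(ℤ^d) = L`. Precomposing a form with `T`
multiplies its coefficient vector by the integer matrix of `T` (acting on row vectors), which is
invertible over `ℚ` because `T` is injective. An injective linear map reflects membership in
spans, so every Green-Tao partition of `ψ` is one of `ψ ∘ T`, and the complexity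
cannot increase.
-/

theorem AddSubgroup.exists_injective_range_eq_of_index_ne_zero {ι : Type*} [Finite ι]
    {H : AddSubgroup (ι → ℤ)} (hH : H.index ≠ 0) :
    ∃ T : (ι → ℤ) →+ (ι → ℤ), Function.Injective T ∧ T.range = H := by
  obtain ⟨e⟩ := Int.addSubgroup_index_ne_zero_iff.mp hH
  refine ⟨H.subtype.comp e.symm, H.subtype_injective.comp e.symm.injective, ?_⟩
  rw [AddMonoidHom.range_comp, AddEquiv.range_eq_top, ← AddMonoidHom.range_eq_map,
    AddSubgroup.range_subtype]

theorem Matrix.det_ne_zero_of_mulVec_injective {n R : Type*} [Fintype n] [DecidableEq n]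
    [CommRing R] [IsDomain R] {A : Matrix n n R} (hA : Function.Injective A.mulVec) :
    A.det ≠ 0 := fun h => by
  obtain ⟨v, hv, hAv⟩ := Matrix.exists_mulVec_eq_zero_iff.mpr h
  exact hv (hA (by rw [hAv, Matrix.mulVec_zero]))

theorem AddMonoidHom.apply_eq_sum_mul {ι : Type*} [Fintype ι] [DecidableEq ι]
    (φ : (ι → ℤ) →+ ℤ) (x : ι → ℤ) : φ x = ∑ l, x l * φ (Pi.single l 1) := by
  conv_lhs => rw [← Finset.univ_sum_single x, map_sum]
  refine Finset.sum_congr rfl fun l _ => ?_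
  rw [← smul_eq_mul, ← map_zsmul, ← Pi.single_smul', smul_eq_mul, mul_one]

open Matrix in
theorem coeffVec_comp {d e : ℕ} (φ : (Fin e → ℤ) →+ ℤ) (T : (Fin d → ℤ) →+ (Fin e → ℤ)) :
    coeffVec (φ.comp T) =
      coeffVec φ ᵥ* (LinearMap.toMatrix' T.toIntLinearMap).map ((↑) : ℤ → ℚ) := by
  funext k
  simp [coeffVec, vecMul, dotProduct, φ.apply_eq_sum_mul (T _), mul_comm]

theorem vecMul_intCast_toMatrix'_injective {d : ℕ} {T : (Fin d → ℤ) →+ (Fin d → ℤ)}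
    (hT : Function.Injective T) :
    Function.Injective ((LinearMap.toMatrix' T.toIntLinearMap).map ((↑) : ℤ → ℚ)).vecMul := by
  refine Matrix.vecMul_injective_of_isUnit ?_
  rw [Matrix.isUnit_iff_isUnit_det, isUnit_iff_ne_zero, ← Int.cast_det, Int.cast_ne_zero]
  exact Matrix.det_ne_zero_of_mulVec_injective fun v w h => hT (by simpa using h)

section TransferAlongInjective

variable {d e t : ℕ} {ψ : Fin t → ((Fin d → ℤ) →+ ℤ)} {ψ' : Fin t → ((Fin e → ℤ) →+ ℤ)}
  {f : (Fin d → ℚ) →ₗ[ℚ] (Fin e → ℚ)}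

theorem IsGTPartition.of_injective (hf : Function.Injective f)
    (hψ : ∀ j, coeffVec (ψ' j) = f (coeffVec (ψ j))) {i : Fin t} {s : ℕ}
    {P : {j : Fin t // j ≠ i} → Fin (s + 1)} (hP : IsGTPartition ψ i s P) :
    IsGTPartition ψ' i s P := by
  intro k
  have hclass : {v | ∃ j : {j : Fin t // j ≠ i}, P j = k ∧ v = coeffVec (ψ' j.1)} =
      f '' {v | ∃ j : {j : Fin t // j ≠ i}, P j = k ∧ v = coeffVec (ψ j.1)} := by
    ext v
    simp only [hψ, Set.mem_ofPred_eq, Set.mem_image]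
    grind
  rw [hclass, hψ, Submodule.apply_mem_span_image_iff_mem_span hf]
  exact hP k

theorem iComplexity_le_of_injective (hf : Function.Injective f)
    (hψ : ∀ j, coeffVec (ψ' j) = f (coeffVec (ψ j))) (i : Fin t) :
    iComplexity ψ' i ≤ iComplexity ψ i :=
  sInf_le_sInf fun _ ⟨s, hs, P, hP⟩ => ⟨s, hs, P, hP.of_injective hf hψ⟩

theorem gtComplexity_le_of_injective (hf : Function.Injective f)
    (hψ : ∀ j, coeffVec (ψ' j) = f (coeffVec (ψ j))) :
    GTComplexity ψ' ≤ GTComplexity ψ :=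
  iSup_mono (iComplexity_le_of_injective hf hψ)

end TransferAlongInjective

theorem gtComplexity_comp_le {d t : ℕ} (ψ : Fin t → ((Fin d → ℤ) →+ ℤ))
    {T : (Fin d → ℤ) →+ (Fin d → ℤ)} (hT : Function.Injective T) :
    GTComplexity (fun j => (ψ j).comp T) ≤ GTComplexity ψ :=
  gtComplexity_le_of_injective (f := Matrix.vecMulLinear _) (vecMul_intCast_toMatrix'_injective hT)
    fun j => coeffVec_comp (ψ j) T

theorem sublattice_of_finite_index_is_range_of_bounded_complexity {d t : ℕ}
    (ψ : Fin t → ((Fin d → ℤ) →+ ℤ)) (s : ℕ)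
    (hs : GTComplexity ψ ≤ (s : ℕ∞))
    (L : AddSubgroup (Fin t → ℤ)) (hL : L ≤ (systemMap ψ).range)
    (hfin : (L.addSubgroupOf (systemMap ψ).range).FiniteIndex) :
    ∃ T : (Fin d → ℤ) →+ (Fin d → ℤ),
      Function.Injective ⇑T ∧ T.range = L.comap (systemMap ψ) ∧
        ((systemMap ψ).comp T).range = L ∧
        GTComplexity (fun j => (ψ j).comp T) ≤ (s : ℕ∞) := by
  have hindex : (L.comap (systemMap ψ)).index ≠ 0 := by
    rw [AddSubgroup.index_comap]
    exact hfin.index_ne_zero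
  obtain ⟨T, hT, hrange⟩ := AddSubgroup.exists_injective_range_eq_of_index_ne_zero hindex
  refine ⟨T, hT, hrange, ?_, (gtComplexity_comp_le ψ hT).trans hs⟩
  rw [AddMonoidHom.range_comp, hrange, AddSubgroup.map_comap_eq, inf_eq_right.mpr hL]
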